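/- Let f(x) = (x−1)^6 and g(x) = (x²+1)³, let A, B ∈ GL₆(ℤ) be their companion matrices, and let v = (A⁻¹B − I)(e₆). Then v = (−6, 12, −20, 12, −6, 0), and the matrix γ = B²·A satisfies: the coefficient of e₆ in γ(v) lies in {1, −1, 2, −2}, and the three vectors v, γ(v), γ⁻¹(v) are linearly independent over ℚ. -/

import Mathlib

/-!
The whole certificate is a finite computation over `ℤ`. The inverses `A⁻¹` and `γ⁻¹` are never
computed: a vector `w` with `M w = x` certifies `M⁻¹ x = w`. Linear independence of
`v, γ v, γ⁻¹ v` follows from a nonzero `3 × 3` minor of the matrix with these rows.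
-/

open Matrix Polynomial

/-- The companion matrix of a monic polynomial `p` of degree `n`: it sends
`e_i ↦ e_{i+1}` for `1 ≤ i ≤ n-1` (zero-indexed: column `j` is `e_{j+1}` when `j+1 < n`),
and `e_n ↦ -(c_0 e_1 + c_1 e_2 + ⋯ + c_{n-1} e_n)`. -/
def companionMat (n : ℕ) (p : Polynomial ℤ) : Matrix (Fin n) (Fin n) ℤ :=
  Matrix.of fun i j =>
    if (j : ℕ) + 1 < n then (if (i : ℕ) = (j : ℕ) + 1 then 1 else 0) else -p.coeff (i : ℕ)

theorem companionMat_eq_of_coeff {n : ℕ} {p : ℤ[X]} {c : Fin n → ℤ}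
    (hc : ∀ i : Fin n, p.coeff i = c i) :
    companionMat n p = of fun i j : Fin n =>
      if (j : ℕ) + 1 < n then (if (i : ℕ) = (j : ℕ) + 1 then 1 else 0) else -c i := by
  ext i j
  simp only [companionMat, of_apply, hc]

theorem companionMat_X_sub_one_pow_six :
    companionMat 6 ((X - 1) ^ 6) =
      !![0, 0, 0, 0, 0, -1;
         1, 0, 0, 0, 0, 6;
         0, 1, 0, 0, 0, -15;
         0, 0, 1, 0, 0, 20;
         0, 0, 0, 1, 0, -15;
         0, 0, 0, 0, 1, 6] := by
  have hc : ∀ i : Fin 6, ((X - 1 : ℤ[X]) ^ 6).coeff i = ![1, -6, 15, -20, 15, -6] i := by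
    intro i
    rw [sub_eq_add_neg, ← C_1, ← C_neg, coeff_X_add_C_pow]
    fin_cases i <;> rfl
  rw [companionMat_eq_of_coeff hc]
  decide

theorem companionMat_X_sq_add_one_pow_three :
    companionMat 6 ((X ^ 2 + 1) ^ 3) =
      !![0, 0, 0, 0, 0, -1;
         1, 0, 0, 0, 0, 0;
         0, 1, 0, 0, 0, -3;
         0, 0, 1, 0, 0, 0;
         0, 0, 0, 1, 0, -3;
         0, 0, 0, 0, 1, 0] := by
  have hc : ∀ i : Fin 6, ((X ^ 2 + 1 : ℤ[X]) ^ 3).coeff i = ![1, 0, 3, 0, 3, 0] i := by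
    have h : (X ^ 2 + 1 : ℤ[X]) ^ 3 = X ^ 6 + 3 * X ^ 4 + 3 * X ^ 2 + 1 := by ring
    intro i
    rw [h]
    fin_cases i <;> simp [coeff_X_pow, coeff_one]
  rw [companionMat_eq_of_coeff hc]
  decide

theorem Matrix.GeneralLinearGroup.inv_mulVec_eq {n R : Type*} [Fintype n] [DecidableEq n]
    [CommRing R] (u : GL n R) {x y : n → R} (h : (u : Matrix n n R) *ᵥ y = x) :
    (↑u⁻¹ : Matrix n n R) *ᵥ x = y := by
  rw [← h, mulVec_mulVec, ← Units.val_mul, inv_mul_cancel, Units.val_one, one_mulVec]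

theorem linearIndependent_of_det_submatrix_ne_zero {R ι m : Type*} [CommRing R] [IsDomain R]
    [Fintype ι] [DecidableEq ι] (u : ι → m → R) (e : ι → m)
    (h : ((of u).submatrix id e).det ≠ 0) :
    LinearIndependent R u :=
  (linearIndependent_rows_of_det_ne_zero h).of_comp (LinearMap.funLeft R R e)

/-- for γ = B²A the coefficient of e₆ in γ(v) lies in {1, -1, 2, -2} and v, γ(v), γ⁻¹(v) are linearly independent over ℚ. -/
theorem entry25_certificate (f g : Polynomial ℤ)
    (hf : f = (Polynomial.X - 1) ^ 6)
    (hg : g = (Polynomial.X ^ 2 + 1) ^ 3)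
    (A B : GL (Fin 6) ℤ)
    (hA : (A : Matrix (Fin 6) (Fin 6) ℤ) = companionMat 6 f)
    (hB : (B : Matrix (Fin 6) (Fin 6) ℤ) = companionMat 6 g)
    (v : Fin 6 → ℤ)
    (hv : v = ((A⁻¹ * B : GL (Fin 6) ℤ) : Matrix (Fin 6) (Fin 6) ℤ) *ᵥ
      Pi.single (5 : Fin 6) 1 - Pi.single (5 : Fin 6) 1)
    (γ : GL (Fin 6) ℤ) (hγ : γ = B ^ 2 * A) :
    v = ![-6, 12, -20, 12, -6, 0] ∧
    ((γ : Matrix (Fin 6) (Fin 6) ℤ) *ᵥ v) 5 ∈ ({1, -1, 2, -2} : Set ℤ) ∧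
    LinearIndependent ℚ
      ![(fun i => (v i : ℚ)),
        (fun i => (((γ : Matrix (Fin 6) (Fin 6) ℤ) *ᵥ v) i : ℚ)),
        (fun i => (((↑γ⁻¹ : Matrix (Fin 6) (Fin 6) ℤ) *ᵥ v) i : ℚ))] := by
  rw [hf, companionMat_X_sub_one_pow_six] at hA
  rw [hg, companionMat_X_sq_add_one_pow_three] at hB
  have hγ' : (γ : Matrix (Fin 6) (Fin 6) ℤ) = (B : Matrix (Fin 6) (Fin 6) ℤ) ^ 2 * A := by
    rw [hγ, Units.val_mul, Units.val_pow_eq_pow_val]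
  have hv' : v = ![-6, 12, -20, 12, -6, 0] := by
    have hAw : (A : Matrix (Fin 6) (Fin 6) ℤ) *ᵥ ![-6, 12, -20, 12, -6, 1] =
        (B : Matrix (Fin 6) (Fin 6) ℤ) *ᵥ Pi.single 5 1 := by
      rw [hA, hB]; decide
    rw [hv, Units.val_mul, ← mulVec_mulVec, GeneralLinearGroup.inv_mulVec_eq A hAw]
    decide
  have hγv : (γ : Matrix (Fin 6) (Fin 6) ℤ) *ᵥ v = ![-12, 6, -36, 12, -24, -2] := by
    rw [hγ', hA, hB, hv']; decide
  have hγinvv : (↑γ⁻¹ : Matrix (Fin 6) (Fin 6) ℤ) *ᵥ v = ![-36, 42, -76, 36, -24, 2] :=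
    GeneralLinearGroup.inv_mulVec_eq γ (by rw [hγ', hA, hB, hv']; decide)
  refine ⟨hv', by simp [hγv], ?_⟩
  apply linearIndependent_of_det_submatrix_ne_zero _ ![0, 1, 2]
  rw [hγv, hγinvv, hv']
  simp [det_fin_three]
  norm_num
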